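/- Let D be a finite set, R ⊆ D^n a nonempty n-ary relation, and 𝒟 = 𝒟(R) the digraph constructed from R. Every endomorphism of 𝒟 maps D into D and R into R, its restriction to D is a unary polymorphism of R, and the restriction map from the set of endomorphisms of 𝒟 to the set of unary polymorphisms of R is a bijection; moreover the action of an endomorphism of 𝒟 on R is the componentwise action of its restriction to D. -/

import Mathlib

open scoped NNRat

/-- A homomorphism between digraphs given by their edge relations. -/
def IsDigraphHom {V₁ V₂ : Type*} (E₁ : V₁ → V₁ → Prop) (E₂ : V₂ → V₂ → Prop)
    (h : V₁ → V₂) : Prop :=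
  ∀ a b, E₁ a b → E₂ (h a) (h b)

/-- Weak reachability (connectivity by oriented paths) in a digraph. -/
def WeakReach {V : Type*} (E : V → V → Prop) : V → V → Prop :=
  Relation.ReflTransGen fun a b => E a b ∨ E b a

/-- Edge relation of the direct power of a digraph. -/
def powEdge {V : Type*} (k : ℕ) (E : V → V → Prop) :
    (Fin k → V) → (Fin k → V) → Prop :=
  fun c d => ∀ i, E (c i) (d i)

/-- The directions of the edges of the oriented path `Q_S`: a single edge, then for
each `l` a single edge (if `l ∈ S`) or a zigzag (otherwise), then a single edge. -/
def QDirs (n : ℕ) (S : Finset (Fin n)) : List Bool :=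
  true :: (((List.finRange n).flatMap fun l =>
    if l ∈ S then [true] else [true, false, true]) ++ [true])

/-- The edge relation of the oriented path whose edge directions are given by `ds`;
its vertices are `0, …, ds.length`, `0` being initial and `ds.length` terminal. -/
def pathEdge (ds : List Bool) : Fin (ds.length + 1) → Fin (ds.length + 1) → Prop :=
  fun a b => ∃ i : Fin ds.length,
    if ds.get i = true then a = i.castSucc ∧ b = i.succ
    else a = i.succ ∧ b = i.castSucc

/-- The directions of the path `Q_{{i : d = r i}}` replacing the edge `(d, r)`. -/
def pathDirs {D : Type} [DecidableEq D] {n : ℕ} (d : D) (r : Fin n → D) : List Bool :=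
  QDirs n (Finset.univ.filter fun i => d = r i)

/-- Internal vertices of the copies of the paths `Q_{{i : d = r i}}` in `𝒟(R)`. -/
structure InnerVert (D : Type) [DecidableEq D] (n : ℕ) (R : Set (Fin n → D)) where
  d : D
  r : Fin n → D
  hr : r ∈ R
  j : ℕ
  hj0 : 0 < j
  hjlen : j < (pathDirs d r).length

/-- The vertex set of the digraph `𝒟(R)`: base vertices `D`, top vertices `R`, and
the internal vertices of the connecting oriented paths. -/
def DVert (D : Type) [DecidableEq D] (n : ℕ) (R : Set (Fin n → D)) : Type :=
  D ⊕ ({t : Fin n → D // t ∈ R} ⊕ InnerVert D n R)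

/-- The `j`-th vertex of the copy of the path `Q_{{i : d = t i}}` joining `d` to `t`. -/
def pathVert {D : Type} [DecidableEq D] {n : ℕ} {R : Set (Fin n → D)}
    (d : D) (t : Fin n → D) (ht : t ∈ R) (j : ℕ) : DVert D n R :=
  if hj0 : j = 0 then Sum.inl d
  else if hjl : (pathDirs d t).length ≤ j then Sum.inr (Sum.inl ⟨t, ht⟩)
  else Sum.inr (Sum.inr ⟨d, t, ht, j, Nat.pos_of_ne_zero hj0, not_le.mp hjl⟩)

/-- The edge relation of the digraph `𝒟(R)`. -/
def DEdge {D : Type} [DecidableEq D] {n : ℕ} {R : Set (Fin n → D)} :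
    DVert D n R → DVert D n R → Prop :=
  fun a b => ∃ (d : D) (t : Fin n → D) (ht : t ∈ R) (i : ℕ)
      (hi : i < (pathDirs d t).length),
    if (pathDirs d t).get ⟨i, hi⟩ = true then
      a = pathVert d t ht i ∧ b = pathVert d t ht (i + 1)
    else
      a = pathVert d t ht (i + 1) ∧ b = pathVert d t ht i

/-- A unary polymorphism of an `n`-ary relation `R`. -/
def IsUnaryPolymorphism {D : Type} {n : ℕ} (R : Set (Fin n → D)) (g : D → D) : Prop :=
  ∀ t ∈ R, (fun i => g (t i)) ∈ R

/-- The unary cost function `u` on the vertices of `𝒟(R)` associated to `ρ : R → ℚ≥0`. -/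
def uFun {D : Type} [DecidableEq D] {n : ℕ} {R : Set (Fin n → D)}
    (ρ : {t : Fin n → D // t ∈ R} → ℚ≥0) : DVert D n R → ℚ≥0 :=
  fun v => match v with
  | Sum.inl _ => 0
  | Sum.inr (Sum.inl t) => ρ t
  | Sum.inr (Sum.inr _) => 0

/-!
Every edge of `𝒟(R)` raises the level (the signed distance from `D`) by one, so along each
path `Q` from `d ∈ D` to `t ∈ R` an endomorphism `h` shifts levels by a constant; as `D` is at
level `0` and `R` at the top level `n + 2`, the shift is `0`. Hence `h` preserves `D` and `R`,
and maps the path `Q_S` from `d` to `t` onto a level-preserving walk along the path `Q_{S'}`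
from `h d` to `h t`. Block by block, such a walk exists iff `S ⊆ S'` and is then unique: a
single edge of `Q_S` cannot go to the peak of a zigzag of `Q_{S'}`, since `Q_S` climbs on
after it and the walk cannot. For `d = t i` we have `i ∈ S`, so `S ⊆ S'` says that `h t` is
`h ∘ t` componentwise. Uniqueness of the walks makes the restriction to `D` injective, and for
a polymorphism `g` the greedy walk on each path extends `g` to an endomorphism.
-/

namespace DigraphOfRelation

/-! ### Levels along oriented paths -/

def netLevel (ds : List Bool) : ℤ := (ds.map fun b => if b then (1 : ℤ) else -1).sum

/-- The level of the `q`-th vertex of the oriented path with edge directions `ds` (`true` for a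
forward edge); past the terminal vertex it stays at `netLevel ds`. -/
def lvl (ds : List Bool) (q : ℕ) : ℤ := netLevel (ds.take q)

@[simp] lemma netLevel_nil : netLevel [] = 0 := rfl

@[simp] lemma netLevel_cons (b : Bool) (ds : List Bool) :
    netLevel (b :: ds) = (if b then 1 else -1) + netLevel ds := by
  simp [netLevel]

@[simp] lemma netLevel_append (ds ds' : List Bool) :
    netLevel (ds ++ ds') = netLevel ds + netLevel ds' := by
  simp [netLevel]

@[simp] lemma lvl_zero (ds : List Bool) : lvl ds 0 = 0 := by simp [lvl]

lemma lvl_of_length_le {ds : List Bool} {q : ℕ} (hq : ds.length ≤ q) :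
    lvl ds q = netLevel ds := by
  rw [lvl, List.take_of_length_le hq]

lemma lvl_succ {ds : List Bool} {q : ℕ} (hq : q < ds.length) :
    lvl ds (q + 1) = lvl ds q + if ds[q] then 1 else -1 := by
  rw [lvl, lvl, List.take_add_one, List.getElem?_eq_getElem hq]
  cases ds[q] <;> simp

lemma lvl_append_length_add (ds ds' : List Bool) (δ : ℕ) :
    lvl (ds ++ ds') (ds.length + δ) = netLevel ds + lvl ds' δ := by
  rw [lvl, List.take_append, List.take_of_length_le (by omega), Nat.add_sub_cancel_left,
    netLevel_append, lvl]

lemma _root_.List.IsPrefix.lvl_eq {ds ds' : List Bool} (h : ds <+: ds') {q : ℕ}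
    (hq : q ≤ ds.length) : lvl ds' q = lvl ds q := by
  rw [lvl, lvl, List.prefix_iff_eq_take.mp h, List.take_take, min_eq_left hq]

/-! ### The paths `Q_S` -/

section QPath

/-- `Q_S` with `S` read as a set `A` of natural numbers: `qDirs A n` is `QDirs n S`
(`QDirs_eq_qDirs`), `blocksDirs A l` lists its edges before the block `Q_{S,l}`, which starts
at position `off A l`. -/
def block (A : Finset ℕ) (l : ℕ) : List Bool := if l ∈ A then [true] else [true, false, true]

def blocksDirs (A : Finset ℕ) : ℕ → List Bool
  | 0 => [true]
  | l + 1 => blocksDirs A l ++ block A l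

def qDirs (A : Finset ℕ) (n : ℕ) : List Bool := blocksDirs A n ++ [true]

def off (A : Finset ℕ) (l : ℕ) : ℕ := (blocksDirs A l).length

variable {A : Finset ℕ} {n l : ℕ}

lemma blocksDirs_eq_cons_flatMap (A : Finset ℕ) (l : ℕ) :
    blocksDirs A l = true :: (List.range l).flatMap (block A) := by
  induction l with
  | zero => rfl
  | succ l ih => simp [blocksDirs, ih, List.range_succ]

lemma QDirs_eq_qDirs (S : Finset (Fin n)) :
    QDirs n S = qDirs (S.map Fin.valEmbedding) n := by
  rw [qDirs, blocksDirs_eq_cons_flatMap, ← List.map_coe_finRange_eq_range, List.flatMap_map,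
    QDirs, List.cons_append]
  congr 3
  funext i
  simp [block, Fin.val_inj]

@[simp] lemma off_zero (A : Finset ℕ) : off A 0 = 1 := rfl

lemma off_succ_of_mem (h : l ∈ A) : off A (l + 1) = off A l + 1 := by
  simp [off, blocksDirs, block, h]

lemma off_succ_of_notMem (h : l ∉ A) : off A (l + 1) = off A l + 3 := by
  simp [off, blocksDirs, block, h]

lemma off_mono (A : Finset ℕ) : Monotone (off A) :=
  monotone_nat_of_le_succ fun l => by simp [off, blocksDirs]

lemma length_qDirs (A : Finset ℕ) (n : ℕ) : (qDirs A n).length = off A n + 1 := by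
  simp [qDirs, off]

lemma netLevel_blocksDirs (A : Finset ℕ) (l : ℕ) : netLevel (blocksDirs A l) = l + 1 := by
  induction l with
  | zero => rfl
  | succ l ih =>
    rw [blocksDirs, netLevel_append, ih, block]
    split_ifs <;> simp

lemma netLevel_qDirs (A : Finset ℕ) (n : ℕ) : netLevel (qDirs A n) = n + 2 := by
  rw [qDirs, netLevel_append, netLevel_blocksDirs]; simp; ring

lemma blocksDirs_prefix {l l' : ℕ} (h : l ≤ l') : blocksDirs A l <+: blocksDirs A l' := by
  induction h with
  | refl => exact List.prefix_refl _
  | step _ ih => exact ih.trans (List.prefix_append _ _)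

lemma blocksDirs_succ_prefix_qDirs (hl : l < n) : blocksDirs A (l + 1) <+: qDirs A n :=
  (blocksDirs_prefix hl).trans (List.prefix_append _ _)

lemma blocksDirs_append_true_prefix_qDirs (hl : l ≤ n) :
    blocksDirs A l ++ [true] <+: qDirs A n := by
  rcases hl.lt_or_eq with hl | rfl
  · refine List.IsPrefix.trans ?_ (blocksDirs_succ_prefix_qDirs hl)
    rw [blocksDirs]
    refine List.prefix_append_right_inj _ |>.mpr ?_
    unfold block; split_ifs <;> simp
  · exact List.prefix_refl _

lemma exists_blocksDirs_eq_append_true (A : Finset ℕ) (l : ℕ) :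
    ∃ X, blocksDirs A l = X ++ [true] := by
  cases l with
  | zero => exact ⟨[], rfl⟩
  | succ l =>
    unfold blocksDirs block
    split_ifs
    · exact ⟨blocksDirs A l, rfl⟩
    · exact ⟨blocksDirs A l ++ [true, false], by simp⟩

lemma lvl_qDirs_off (hl : l ≤ n) : lvl (qDirs A n) (off A l) = l + 1 := by
  rw [(blocksDirs_append_true_prefix_qDirs hl).lvl_eq (by simp [off]), off,
    ← Nat.add_zero (blocksDirs A l).length, lvl_append_length_add, netLevel_blocksDirs]
  simp

lemma lvl_qDirs_off_add_one (hl : l ≤ n) : lvl (qDirs A n) (off A l + 1) = l + 2 := by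
  rw [(blocksDirs_append_true_prefix_qDirs hl).lvl_eq (by simp [off]), off,
    lvl_append_length_add, netLevel_blocksDirs]
  simp [lvl]; ring

lemma lvl_qDirs_off_sub_one (hl : l ≤ n) : lvl (qDirs A n) (off A l - 1) = l := by
  obtain ⟨X, hX⟩ := exists_blocksDirs_eq_append_true A l
  have hnet := netLevel_blocksDirs A l
  rw [hX, netLevel_append] at hnet
  have hpre : X <+: qDirs A n := (List.prefix_append _ _).trans
    (hX ▸ (List.prefix_append _ _).trans (blocksDirs_append_true_prefix_qDirs hl))
  rw [off, hX, List.length_append, List.length_singleton, Nat.add_sub_cancel,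
    hpre.lvl_eq le_rfl, lvl_of_length_le le_rfl]
  simp at hnet; linarith

lemma lvl_qDirs_off_add_two (hl : l < n) (h : l ∉ A) :
    lvl (qDirs A n) (off A l + 2) = l + 1 := by
  rw [(blocksDirs_succ_prefix_qDirs hl).lvl_eq (by simp [off, blocksDirs, block, h]), blocksDirs,
    off, lvl_append_length_add, netLevel_blocksDirs]
  simp [lvl, block, h]

lemma lvl_block_mem_Icc (A : Finset ℕ) (l δ : ℕ) :
    0 ≤ lvl (block A l) δ ∧ lvl (block A l) δ ≤ 1 := by
  unfold block
  split_ifs <;> rcases δ with _ | _ | _ | _ | δ <;> simp [lvl]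

lemma lvl_blocksDirs_mem_Icc {q : ℕ} (h0 : 0 < q) (hq : q ≤ off A l) :
    1 ≤ lvl (blocksDirs A l) q ∧ lvl (blocksDirs A l) q ≤ l + 1 := by
  induction l with
  | zero =>
    obtain rfl : q = 1 := by simp at hq; omega
    simp [blocksDirs, lvl]
  | succ l ih =>
    rcases le_or_gt q (off A l) with hle | hlt
    · rw [(blocksDirs_prefix (Nat.le_succ l)).lvl_eq hle]
      have := ih hle
      constructor <;> push_cast <;> linarith
    · obtain ⟨δ, rfl⟩ := Nat.exists_eq_add_of_le hlt.le
      rw [blocksDirs, off, lvl_append_length_add, netLevel_blocksDirs]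
      have := lvl_block_mem_Icc A l δ
      constructor <;> push_cast <;> linarith

lemma lvl_qDirs_mem_Icc {q : ℕ} (h0 : 0 < q) (hq : q < (qDirs A n).length) :
    1 ≤ lvl (qDirs A n) q ∧ lvl (qDirs A n) q ≤ n + 1 := by
  rw [length_qDirs] at hq
  rw [qDirs, (List.prefix_append _ _).lvl_eq (by rw [off] at hq; omega)]
  exact lvl_blocksDirs_mem_Icc h0 (by omega)

end QPath

/-! ### Level walks between paths `Q_S` -/

section LevelWalk

def LevelStep (ds ds' : List Bool) (ψ : ℕ → ℕ) (j : ℕ) : Prop :=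
  (ψ (j + 1) = ψ j + 1 ∨ ψ j = ψ (j + 1) + 1) ∧ lvl ds' (ψ (j + 1)) = lvl ds (j + 1)

/-- Since every edge raises the level by one, level walks are exactly the homomorphisms from the
path `ds` to the path `ds'` that preserve initial vertices. -/
structure IsLevelWalk (ds ds' : List Bool) (ψ : ℕ → ℕ) : Prop where
  map_zero : ψ 0 = 0
  levelStep : ∀ j < ds.length, LevelStep ds ds' ψ j

namespace IsLevelWalk

variable {ds ds' : List Bool} {A A' : Finset ℕ} {n l j p : ℕ} {ψ : ℕ → ℕ}

lemma adj (hψ : IsLevelWalk ds ds' ψ) (hj : j < ds.length) :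
    ψ (j + 1) = ψ j + 1 ∨ ψ j = ψ (j + 1) + 1 :=
  (hψ.levelStep j hj).1

lemma lvl_eq (hψ : IsLevelWalk ds ds' ψ) (hj : j ≤ ds.length) : lvl ds' (ψ j) = lvl ds j := by
  cases j with
  | zero => simp [hψ.map_zero]
  | succ j => exact (hψ.levelStep j hj).2

lemma eq_add_one (hψ : IsLevelWalk ds ds' ψ) (hj : j < ds.length) (hp : ψ j = p)
    (h : lvl ds' (p - 1) ≠ lvl ds (j + 1)) : ψ (j + 1) = p + 1 := by
  obtain ⟨h' | h', hlvl⟩ := hψ.levelStep j hj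
  · omega
  · rw [← hp, h', Nat.add_sub_cancel] at h
    exact absurd hlvl h

lemma eq_sub_one (hψ : IsLevelWalk ds ds' ψ) (hj : j < ds.length) (hp : ψ j = p)
    (h : lvl ds' (p + 1) ≠ lvl ds (j + 1)) : ψ (j + 1) + 1 = p := by
  obtain ⟨h' | h', hlvl⟩ := hψ.levelStep j hj
  · rw [← hp, ← h'] at h
    exact absurd hlvl h
  · omega

lemma ne_of_lvl_ne (hψ : IsLevelWalk ds ds' ψ) (hj : j < ds.length)
    (h₁ : lvl ds' (p + 1) ≠ lvl ds (j + 1)) (h₂ : lvl ds' (p - 1) ≠ lvl ds (j + 1)) :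
    ψ j ≠ p := fun hp => by
  have := hψ.eq_add_one hj hp h₂
  have := hψ.eq_sub_one hj hp h₁
  omega

lemma apply_off_add_one (hψ : IsLevelWalk (qDirs A n) (qDirs A' n) ψ) (hl : l ≤ n)
    (hP : ψ (off A l) = off A' l) : ψ (off A l + 1) = off A' l + 1 :=
  hψ.eq_add_one (by rw [length_qDirs]; have := off_mono A hl; omega) hP
    (by rw [lvl_qDirs_off_sub_one hl, lvl_qDirs_off_add_one hl]; omega)

/-- A single edge of `Q_A` cannot go to the peak of a zigzag of `Q_A'`: the walk could not climb
on from there. -/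
lemma mem_of_mem (hψ : IsLevelWalk (qDirs A n) (qDirs A' n) ψ) (hl : l < n)
    (hP : ψ (off A l) = off A' l) (hA : l ∈ A) :
    l ∈ A' ∧ ψ (off A (l + 1)) = off A' (l + 1) := by
  have h1 := hψ.apply_off_add_one hl.le hP
  have hlen : off A (l + 1) < (qDirs A n).length := by
    rw [length_qDirs]; have := off_mono A (show l + 1 ≤ n from hl); omega
  have hnext := lvl_qDirs_off_add_one (A := A) (show l + 1 ≤ n from hl)
  rw [off_succ_of_mem hA] at hlen hnext ⊢
  have hA' : l ∈ A' := by
    by_contra hA'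
    refine hψ.ne_of_lvl_ne hlen ?_ ?_ h1
    · rw [lvl_qDirs_off_add_two hl hA', hnext]; omega
    · rw [Nat.add_sub_cancel, lvl_qDirs_off hl.le, hnext]; omega
  rw [h1, off_succ_of_mem hA']
  exact ⟨hA', rfl⟩

/-- A zigzag of `Q_A` is folded onto a single edge of `Q_A'` or mapped onto a zigzag of `Q_A'`;
going back from the peak of that zigzag would again get stuck at the peak. -/
lemma block_of_notMem (hψ : IsLevelWalk (qDirs A n) (qDirs A' n) ψ) (hl : l < n)
    (hP : ψ (off A l) = off A' l) (hA : l ∉ A) :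
    ψ (off A l + 2) = (if l ∈ A' then off A' l else off A' l + 2) ∧
      ψ (off A (l + 1)) = off A' (l + 1) := by
  have h1 := hψ.apply_off_add_one hl.le hP
  have hlen : off A (l + 1) < (qDirs A n).length := by
    rw [length_qDirs]; have := off_mono A (show l + 1 ≤ n from hl); omega
  have hnext := lvl_qDirs_off_add_one (A := A) (show l + 1 ≤ n from hl)
  have d3 := lvl_qDirs_off (A := A) (show l + 1 ≤ n from hl)
  rw [off_succ_of_notMem hA] at hlen hnext d3 ⊢
  set q := off A l
  set P := off A' l
  have d2 : lvl (qDirs A n) (q + 1 + 1) = l + 1 := lvl_qDirs_off_add_two hl hA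
  have c_1 : lvl (qDirs A' n) (P - 1) = l := lvl_qDirs_off_sub_one hl.le
  change ψ (q + 1 + 1) = _ ∧ ψ (q + 1 + 1 + 1) = _
  change lvl _ (q + 1 + 1 + 1 + 1) = _ at hnext
  change lvl _ (q + 1 + 1 + 1) = _ at d3
  by_cases hA' : l ∈ A'
  · have c2 := lvl_qDirs_off_add_one (A := A') (show l + 1 ≤ n from hl)
    rw [off_succ_of_mem hA'] at c2 ⊢
    have h2 : ψ (q + 1 + 1) = P := by
      have := hψ.eq_sub_one (by omega) h1 (by rw [c2, d2]; omega)
      omega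
    rw [if_pos hA']
    exact ⟨h2, hψ.eq_add_one (by omega) h2 (by rw [c_1, d3]; omega)⟩
  · have c2 : lvl (qDirs A' n) (P + 1 + 1) = l + 1 := lvl_qDirs_off_add_two hl hA'
    rw [off_succ_of_notMem hA', if_neg hA']
    have stuck : ψ (q + 1 + 1 + 1) ≠ P + 1 := hψ.ne_of_lvl_ne hlen
      (by rw [c2, hnext]; omega)
      (by rw [Nat.add_sub_cancel, lvl_qDirs_off hl.le, hnext]; omega)
    have h2 : ψ (q + 1 + 1) = P + 1 + 1 := by
      rcases hψ.adj (j := q + 1) (by omega) with h | h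
      · omega
      · exact absurd (hψ.eq_add_one (j := q + 1 + 1) (by omega) (p := P) (by omega)
          (by rw [c_1, d3]; omega))
          stuck
    have := hψ.adj (j := q + 1 + 1) (by omega)
    exact ⟨h2, by omega⟩

lemma apply_off (hψ : IsLevelWalk (qDirs A n) (qDirs A' n) ψ) :
    ∀ l ≤ n, ψ (off A l) = off A' l ∧ ∀ i < l, i ∈ A → i ∈ A'
  | 0, _ => by
    have := hψ.adj (j := 0) (by simp [length_qDirs])
    simp only [off_zero, hψ.map_zero, zero_add] at this ⊢
    exact ⟨by omega, fun i hi => absurd hi (Nat.not_lt_zero i)⟩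
  | l + 1, hl => by
    obtain ⟨hP, hsub⟩ := hψ.apply_off l (by omega)
    by_cases hA : l ∈ A
    · obtain ⟨hA', hnext⟩ := hψ.mem_of_mem hl hP hA
      refine ⟨hnext, fun i hi hiA => ?_⟩
      rcases Nat.lt_succ_iff_lt_or_eq.mp hi with hi | rfl
      exacts [hsub i hi hiA, hA']
    · refine ⟨(hψ.block_of_notMem hl hP hA).2, fun i hi hiA => ?_⟩
      rcases Nat.lt_succ_iff_lt_or_eq.mp hi with hi | rfl
      exacts [hsub i hi hiA, absurd hiA hA]

lemma subset (hψ : IsLevelWalk (qDirs A n) (qDirs A' n) ψ) : ∀ i < n, i ∈ A → i ∈ A' :=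
  (hψ.apply_off n le_rfl).2

lemma apply_length (hψ : IsLevelWalk (qDirs A n) (qDirs A' n) ψ) :
    ψ (qDirs A n).length = (qDirs A' n).length := by
  rw [length_qDirs, length_qDirs]
  exact hψ.apply_off_add_one le_rfl (hψ.apply_off n le_rfl).1

lemma eqOn {ψ' : ℕ → ℕ} (hψ : IsLevelWalk (qDirs A n) (qDirs A' n) ψ)
    (hψ' : IsLevelWalk (qDirs A n) (qDirs A' n) ψ') :
    ∀ j ≤ (qDirs A n).length, ψ j = ψ' j := by
  suffices h : ∀ l ≤ n, ∀ j ≤ off A l, ψ j = ψ' j by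
    intro j hj
    rcases hj.lt_or_eq with hj | rfl
    · exact h n le_rfl j (by rw [length_qDirs] at hj; omega)
    · rw [hψ.apply_length, hψ'.apply_length]
  intro l
  induction l with
  | zero =>
    intro _ j hj
    rcases (show j = 0 ∨ j = 1 by simp at hj; omega) with rfl | rfl
    · rw [hψ.map_zero, hψ'.map_zero]
    · exact (hψ.apply_off 0 (by omega)).1.trans (hψ'.apply_off 0 (by omega)).1.symm
  | succ l ih =>
    intro hl j hj
    rcases le_or_gt j (off A l) with hle | hlt
    · exact ih (by omega) j hle
    have hP := (hψ.apply_off l (by omega)).1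
    have hP' := (hψ'.apply_off l (by omega)).1
    have h1 := hψ.apply_off_add_one (by omega) hP
    have h1' := hψ'.apply_off_add_one (by omega) hP'
    by_cases hA : l ∈ A
    · rw [off_succ_of_mem hA] at hj
      obtain rfl : j = off A l + 1 := by omega
      rw [h1, h1']
    · obtain ⟨h2, h3⟩ := hψ.block_of_notMem hl hP hA
      obtain ⟨h2', h3'⟩ := hψ'.block_of_notMem hl hP' hA
      rcases (show j = off A l + 1 ∨ j = off A l + 2 ∨ j = off A (l + 1) by
        rw [off_succ_of_notMem hA] at hj ⊢; omega) with rfl | rfl | rfl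
      · rw [h1, h1']
      · rw [h2, h2']
      · rw [h3, h3']

end IsLevelWalk

def greedyWalk (ds ds' : List Bool) : ℕ → ℕ
  | 0 => 0
  | j + 1 =>
    if lvl ds' (greedyWalk ds ds' j + 1) = lvl ds (j + 1) then greedyWalk ds ds' j + 1
    else greedyWalk ds ds' j - 1

variable {ds ds' : List Bool} {A A' : Finset ℕ} {n l j : ℕ}

lemma greedyWalk_succ_of_eq (h : lvl ds' (greedyWalk ds ds' j + 1) = lvl ds (j + 1)) :
    greedyWalk ds ds' (j + 1) = greedyWalk ds ds' j + 1 := by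
  rw [greedyWalk, if_pos h]

lemma greedyWalk_succ_of_ne (h : lvl ds' (greedyWalk ds ds' j + 1) ≠ lvl ds (j + 1)) :
    greedyWalk ds ds' (j + 1) = greedyWalk ds ds' j - 1 := by
  rw [greedyWalk, if_neg h]

lemma levelStep_greedyWalk_of_eq (h : lvl ds' (greedyWalk ds ds' j + 1) = lvl ds (j + 1)) :
    LevelStep ds ds' (greedyWalk ds ds') j := by
  have g := greedyWalk_succ_of_eq h
  exact ⟨Or.inl g, by rw [g, h]⟩

local notation "φ" => greedyWalk (qDirs A n) (qDirs A' n)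

lemma greedyWalk_off_add_one (hl : l ≤ n)
    (hP : φ (off A l) = off A' l) :
    φ (off A l + 1) = off A' l + 1 ∧
      LevelStep (qDirs A n) (qDirs A' n) φ (off A l) := by
  have h : lvl (qDirs A' n) (φ (off A l) + 1) = lvl (qDirs A n) (off A l + 1) := by
    rw [hP, lvl_qDirs_off_add_one hl, lvl_qDirs_off_add_one hl]
  rw [← hP]
  exact ⟨greedyWalk_succ_of_eq h, levelStep_greedyWalk_of_eq h⟩

lemma greedyWalk_block_of_notMem (hl : l < n) (hA : l ∉ A)
    (hP : φ (off A l) = off A' l) :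
    φ (off A (l + 1)) = off A' (l + 1) ∧
      LevelStep (qDirs A n) (qDirs A' n) φ (off A l + 1) ∧
      LevelStep (qDirs A n) (qDirs A' n) φ (off A l + 2) := by
  have g1 := (greedyWalk_off_add_one hl.le hP).1
  have d2 := lvl_qDirs_off_add_two hl hA
  have d3 := lvl_qDirs_off (A := A) (show l + 1 ≤ n from hl)
  rw [off_succ_of_notMem hA] at d3 ⊢
  set q := off A l
  set P := off A' l
  change lvl _ (q + 1 + 1 + 1) = _ at d3
  change φ (q + 1 + 1 + 1) = _ ∧ _ ∧ LevelStep _ _ φ (q + 1 + 1)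
  by_cases hA' : l ∈ A'
  · have c2 := lvl_qDirs_off_add_one (A := A') (show l + 1 ≤ n from hl)
    rw [off_succ_of_mem hA'] at c2 ⊢
    have hne : lvl (qDirs A' n) (φ (q + 1) + 1) ≠ lvl (qDirs A n) (q + 1 + 1) := by
      rw [g1, c2, d2]; push_cast; omega
    have g2 : φ (q + 1 + 1) = P := by
      rw [greedyWalk_succ_of_ne hne, g1, Nat.add_sub_cancel]
    have h3 : lvl (qDirs A' n) (φ (q + 1 + 1) + 1) = lvl (qDirs A n) (q + 1 + 1 + 1) := by
      rw [g2, lvl_qDirs_off_add_one hl.le, d3]; push_cast; ring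
    refine ⟨by rw [greedyWalk_succ_of_eq h3, g2], ⟨Or.inr (by rw [g1, g2]), ?_⟩,
      levelStep_greedyWalk_of_eq h3⟩
    rw [g2, lvl_qDirs_off hl.le, d2]
  · have c3 := lvl_qDirs_off (A := A') (show l + 1 ≤ n from hl)
    rw [off_succ_of_notMem hA'] at c3 ⊢
    have h2 : lvl (qDirs A' n) (φ (q + 1) + 1) = lvl (qDirs A n) (q + 1 + 1) := by
      rw [g1, d2]; exact lvl_qDirs_off_add_two hl hA'
    have g2 := greedyWalk_succ_of_eq h2
    have h3 : lvl (qDirs A' n) (φ (q + 1 + 1) + 1) = lvl (qDirs A n) (q + 1 + 1 + 1) := by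
      rw [g2, g1, d3]; exact c3
    exact ⟨by rw [greedyWalk_succ_of_eq h3, g2, g1], levelStep_greedyWalk_of_eq h2,
      levelStep_greedyWalk_of_eq h3⟩

lemma isLevelWalk_greedyWalk (hsub : ∀ i < n, i ∈ A → i ∈ A') :
    IsLevelWalk (qDirs A n) (qDirs A' n) φ := by
  have hoff : ∀ l ≤ n, φ (off A l) = off A' l ∧
      ∀ j < off A l, LevelStep (qDirs A n) (qDirs A' n) φ j := by
    intro l
    induction l with
    | zero =>
      intro _
      have h1 : lvl (qDirs A' n) (φ 0 + 1) = lvl (qDirs A n) (0 + 1) := by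
        simpa [greedyWalk] using (lvl_qDirs_off (A := A') (Nat.zero_le n)).trans
          (lvl_qDirs_off (A := A) (Nat.zero_le n)).symm
      refine ⟨greedyWalk_succ_of_eq h1, fun j hj => ?_⟩
      obtain rfl : j = 0 := by simpa using hj
      exact levelStep_greedyWalk_of_eq h1
    | succ l ih =>
      intro hl
      obtain ⟨hP, hsteps⟩ := ih (by omega)
      obtain ⟨g1, hstep⟩ := greedyWalk_off_add_one (by omega : l ≤ n) hP
      by_cases hA : l ∈ A
      · rw [off_succ_of_mem hA, g1, off_succ_of_mem (hsub l hl hA)]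
        refine ⟨rfl, fun j hj => ?_⟩
        rcases Nat.lt_succ_iff_lt_or_eq.mp hj with hj | rfl
        exacts [hsteps j hj, hstep]
      · obtain ⟨hnext, hstep1, hstep2⟩ := greedyWalk_block_of_notMem hl hA hP
        refine ⟨hnext, fun j hj => ?_⟩
        rw [off_succ_of_notMem hA] at hj
        rcases (show j < off A l ∨ j = off A l ∨ j = off A l + 1 ∨ j = off A l + 2 by omega)
          with hj | rfl | rfl | rfl
        exacts [hsteps j hj, hstep, hstep1, hstep2]
  obtain ⟨hP, hsteps⟩ := hoff n le_rfl
  refine ⟨rfl, fun j hj => ?_⟩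
  rw [length_qDirs] at hj
  rcases (Nat.lt_succ_iff.mp hj).lt_or_eq with hj | rfl
  exacts [hsteps j hj, (greedyWalk_off_add_one le_rfl hP).2]

end LevelWalk

/-! ### The digraph `𝒟(R)` -/

section Digraph

variable {D : Type} [DecidableEq D] {n : ℕ} {R : Set (Fin n → D)}

/-- The set `{i : d = t i}` of `Q_{{i : d = t i}}`, read in `ℕ`. -/
def agreeSet (d : D) (t : Fin n → D) : Finset ℕ :=
  (Finset.univ.filter fun i => d = t i).map Fin.valEmbedding

lemma pathDirs_eq_qDirs (d : D) (t : Fin n → D) : pathDirs d t = qDirs (agreeSet d t) n :=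
  QDirs_eq_qDirs _

lemma coe_mem_agreeSet {d : D} {t : Fin n → D} {i : Fin n} :
    (i : ℕ) ∈ agreeSet d t ↔ d = t i := by
  simp [agreeSet, Fin.val_inj]

lemma agreeSet_subset_comp (g : D → D) (d : D) (t : Fin n → D) :
    ∀ i < n, i ∈ agreeSet d t → i ∈ agreeSet (g d) fun i => g (t i) := by
  intro i hi h
  rw [← Fin.val_mk hi, coe_mem_agreeSet] at h ⊢
  rw [h]

lemma two_le_length_pathDirs (d : D) (t : Fin n → D) : 2 ≤ (pathDirs d t).length := by
  rw [pathDirs_eq_qDirs, length_qDirs]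
  have := off_mono (agreeSet d t) (Nat.zero_le n)
  simp at this; omega

variable {d : D} {t : Fin n → D} {ht : t ∈ R} {j : ℕ}

@[simp] lemma pathVert_zero : pathVert d t ht 0 = Sum.inl d := rfl

lemma pathVert_of_length_le (hj : (pathDirs d t).length ≤ j) :
    pathVert d t ht j = Sum.inr (Sum.inl ⟨t, ht⟩) := by
  have := two_le_length_pathDirs d t
  unfold pathVert
  exact (dif_neg (by omega)).trans (dif_pos hj)

lemma pathVert_of_lt (h0 : 0 < j) (hj : j < (pathDirs d t).length) :
    pathVert d t ht j = Sum.inr (Sum.inr ⟨d, t, ht, j, h0, hj⟩) := by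
  unfold pathVert
  exact (dif_neg (by omega)).trans (dif_neg (by omega))

lemma pathVert_cases (d : D) (t : Fin n → D) (ht : t ∈ R) (j : ℕ) :
    (j = 0 ∧ pathVert d t ht j = Sum.inl d) ∨
      (∃ (h0 : 0 < j) (hj : j < (pathDirs d t).length),
        pathVert d t ht j = Sum.inr (Sum.inr ⟨d, t, ht, j, h0, hj⟩)) ∨
      ((pathDirs d t).length ≤ j ∧ pathVert d t ht j = Sum.inr (Sum.inl ⟨t, ht⟩)) := by
  rcases Nat.eq_zero_or_pos j with rfl | h0
  · exact Or.inl ⟨rfl, rfl⟩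
  rcases lt_or_ge j (pathDirs d t).length with hj | hj
  exacts [Or.inr (Or.inl ⟨h0, hj, pathVert_of_lt h0 hj⟩),
    Or.inr (Or.inr ⟨hj, pathVert_of_length_le hj⟩)]

lemma eq_of_pathVert_eq_inl {e : D} (h : pathVert d t ht j = Sum.inl e) : j = 0 ∧ d = e := by
  rcases pathVert_cases d t ht j with ⟨h0, h'⟩ | ⟨_, _, h'⟩ | ⟨_, h'⟩
  · rw [h'] at h; exact ⟨h0, Sum.inl.inj h⟩
  · rw [h'] at h; cases h
  · rw [h'] at h; cases h

lemma eq_of_pathVert_eq_top {s : {t : Fin n → D // t ∈ R}}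
    (h : pathVert d t ht j = Sum.inr (Sum.inl s)) : (pathDirs d t).length ≤ j ∧ s.1 = t := by
  rcases pathVert_cases d t ht j with ⟨_, h'⟩ | ⟨_, _, h'⟩ | ⟨hj, h'⟩
  · rw [h'] at h; cases h
  · rw [h'] at h; cases h
  · rw [h'] at h; cases h; exact ⟨hj, rfl⟩

lemma eq_of_pathVert_eq_inner {iv : InnerVert D n R}
    (h : pathVert d t ht j = Sum.inr (Sum.inr iv)) :
    iv.d = d ∧ iv.r = t ∧ iv.j = j ∧ 0 < j ∧ j < (pathDirs d t).length := by
  rcases pathVert_cases d t ht j with ⟨_, h'⟩ | ⟨h0, hj, h'⟩ | ⟨_, h'⟩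
  · rw [h'] at h; cases h
  · rw [h'] at h; cases h; exact ⟨rfl, rfl, rfl, h0, hj⟩
  · rw [h'] at h; cases h

lemma pathVert_injOn {j' : ℕ} (hj : j ≤ (pathDirs d t).length)
    (hj' : j' ≤ (pathDirs d t).length) (h : pathVert d t ht j = pathVert d t ht j') : j = j' := by
  rcases pathVert_cases d t ht j with ⟨rfl, h'⟩ | ⟨_, _, h'⟩ | ⟨hlen, h'⟩
  · rw [h'] at h; exact (eq_of_pathVert_eq_inl h.symm).1.symm
  · rw [h'] at h; exact (eq_of_pathVert_eq_inner h.symm).2.2.1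
  · rw [h'] at h; have := (eq_of_pathVert_eq_top h.symm).1; omega

def Lv : DVert D n R → ℤ
  | Sum.inl _ => 0
  | Sum.inr (Sum.inl _) => n + 2
  | Sum.inr (Sum.inr iv) => lvl (pathDirs iv.d iv.r) iv.j

lemma Lv_pathVert (d : D) (t : Fin n → D) (ht : t ∈ R) (j : ℕ) :
    Lv (pathVert d t ht j) = lvl (pathDirs d t) j := by
  rcases pathVert_cases d t ht j with ⟨rfl, h'⟩ | ⟨_, _, h'⟩ | ⟨hj, h'⟩
  · rw [h']; simp [Lv]
  · rw [h']; rfl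
  · rw [h', lvl_of_length_le hj, pathDirs_eq_qDirs, netLevel_qDirs]; rfl

lemma Lv_inner_mem_Icc (iv : InnerVert D n R) :
    1 ≤ Lv (Sum.inr (Sum.inr iv)) ∧ Lv (Sum.inr (Sum.inr iv)) ≤ n + 1 := by
  have h := iv.hjlen
  show 1 ≤ lvl (pathDirs iv.d iv.r) iv.j ∧ lvl (pathDirs iv.d iv.r) iv.j ≤ n + 1
  rw [pathDirs_eq_qDirs] at h ⊢
  exact lvl_qDirs_mem_Icc iv.hj0 h

lemma Lv_mem_Icc (v : DVert D n R) : 0 ≤ Lv v ∧ Lv v ≤ n + 2 := by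
  rcases v with _ | _ | iv
  · exact ⟨le_rfl, by simp [Lv]; omega⟩
  · exact ⟨by simp [Lv]; omega, le_rfl⟩
  · have := Lv_inner_mem_Icc iv
    constructor <;> linarith

lemma exists_eq_inl_of_Lv_eq_zero {v : DVert D n R} (h : Lv v = 0) : ∃ e, v = Sum.inl e := by
  rcases v with e | _ | iv
  · exact ⟨e, rfl⟩
  · simp [Lv] at h; omega
  · have := Lv_inner_mem_Icc iv; omega

lemma exists_eq_top_of_Lv_eq {v : DVert D n R} (h : Lv v = n + 2) :
    ∃ s, v = Sum.inr (Sum.inl s) := by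
  rcases v with _ | s | iv
  · simp [Lv] at h; omega
  · exact ⟨s, rfl⟩
  · have := Lv_inner_mem_Icc iv; omega

lemma exists_eq_inner_of_Lv {v : DVert D n R} (h₁ : 1 ≤ Lv v) (h₂ : Lv v ≤ n + 1) :
    ∃ iv, v = Sum.inr (Sum.inr iv) := by
  rcases v with _ | _ | iv
  · simp [Lv] at h₁
  · simp [Lv] at h₂
  · exact ⟨iv, rfl⟩

lemma DEdge.exists_pathVert {a b : DVert D n R} (h : DEdge a b) :
    ∃ (d : D) (t : Fin n → D) (ht : t ∈ R) (i : ℕ), i < (pathDirs d t).length ∧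
      ((a = pathVert d t ht i ∧ b = pathVert d t ht (i + 1)) ∨
        (a = pathVert d t ht (i + 1) ∧ b = pathVert d t ht i)) := by
  obtain ⟨d, t, ht, i, hi, h⟩ := h
  refine ⟨d, t, ht, i, hi, ?_⟩
  split_ifs at h
  exacts [Or.inl h, Or.inr h]

lemma DEdge.Lv_eq {a b : DVert D n R} (h : DEdge a b) : Lv b = Lv a + 1 := by
  obtain ⟨d, t, ht, i, hi, h⟩ := h
  have hlvl := lvl_succ hi
  rw [List.get_eq_getElem] at h
  split_ifs at h hlvl <;> obtain ⟨rfl, rfl⟩ := h <;> rw [Lv_pathVert, Lv_pathVert, hlvl]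
  ring

lemma DEdge_pathVert_of_lvl {p p' : ℕ} (hadj : p' = p + 1 ∨ p = p' + 1)
    (hlvl : lvl (pathDirs d t) p' = lvl (pathDirs d t) p + 1) :
    DEdge (pathVert d t ht p) (pathVert d t ht p') := by
  rcases hadj with rfl | rfl
  · have hp : p < (pathDirs d t).length := by
      by_contra hp
      rw [lvl_of_length_le (by omega), lvl_of_length_le (by omega)] at hlvl
      omega
    rw [lvl_succ hp] at hlvl
    refine ⟨d, t, ht, p, hp, ?_⟩
    split_ifs at hlvl with hdir
    · simp [hdir]
    · omega
  · have hp : p' < (pathDirs d t).length := by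
      by_contra hp
      rw [lvl_of_length_le (by omega), lvl_of_length_le (by omega)] at hlvl
      omega
    rw [lvl_succ hp] at hlvl
    refine ⟨d, t, ht, p', hp, ?_⟩
    split_ifs at hlvl with hdir
    · omega
    · simp [hdir]

lemma pathVert_adj {j : ℕ} (hj : j < (pathDirs d t).length) :
    DEdge (pathVert d t ht j) (pathVert d t ht (j + 1)) ∨
      DEdge (pathVert d t ht (j + 1)) (pathVert d t ht j) := by
  have hlvl := lvl_succ hj
  split_ifs at hlvl
  · exact Or.inl (DEdge_pathVert_of_lvl (Or.inl rfl) hlvl)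
  · exact Or.inr (DEdge_pathVert_of_lvl (Or.inr rfl) (by rw [hlvl]; ring))

lemma exists_eq_pathVert_of_adj {p : ℕ} (h0 : 0 < p) (hp : p < (pathDirs d t).length)
    {b : DVert D n R} (h : DEdge (pathVert d t ht p) b ∨ DEdge b (pathVert d t ht p)) :
    ∃ p', (p' = p + 1 ∨ p = p' + 1) ∧ b = pathVert d t ht p' := by
  rw [pathVert_of_lt h0 hp] at h
  have key : ∀ {d' t'} {ht' : t' ∈ R} {i i' : ℕ}, (i' = i + 1 ∨ i = i' + 1) →
      Sum.inr (Sum.inr ⟨d, t, ht, p, h0, hp⟩) = pathVert d' t' ht' i →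
      b = pathVert d' t' ht' i' →
      ∃ p', (p' = p + 1 ∨ p = p' + 1) ∧ b = pathVert d t ht p' := by
    intro d' t' ht' i i' hii' ha hb
    obtain ⟨rfl, rfl, rfl, -⟩ := eq_of_pathVert_eq_inner ha.symm
    exact ⟨i', hii', hb⟩
  rcases h with h | h <;>
    obtain ⟨d, t, ht, i, -, ⟨ha, hb⟩ | ⟨ha, hb⟩⟩ := DEdge.exists_pathVert h
  exacts [key (Or.inl rfl) ha hb, key (Or.inr rfl) ha hb, key (Or.inr rfl) hb ha,
    key (Or.inl rfl) hb ha]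

/-- The neighbours of an inner vertex all lie on its own path, so a walk can only change paths
in `D` or `R`. -/
lemma walk_interior_eq_pathVert {T : ℕ} {w : ℕ → DVert D n R} {iv : InnerVert D n R}
    (hiv : w 1 = Sum.inr (Sum.inr iv))
    (hadj : ∀ j < T, DEdge (w j) (w (j + 1)) ∨ DEdge (w (j + 1)) (w j))
    (hinner : ∀ j, 0 < j → j < T → ∃ iv, w j = Sum.inr (Sum.inr iv)) :
    ∀ j, 0 < j → j < T → ∃ p, 0 < p ∧ p < (pathDirs iv.d iv.r).length ∧
      w j = pathVert iv.d iv.r iv.hr p := by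
  intro j h0 hj
  induction j with
  | zero => omega
  | succ j ih =>
    rcases Nat.eq_zero_or_pos j with rfl | hj0
    · exact ⟨iv.j, iv.hj0, iv.hjlen, hiv.trans (pathVert_of_lt iv.hj0 iv.hjlen).symm⟩
    obtain ⟨p, hp0, hp, hw⟩ := ih hj0 (by omega)
    obtain ⟨p', -, hw'⟩ := exists_eq_pathVert_of_adj hp0 hp (hw ▸ hadj j (by omega))
    obtain ⟨iv', hiv'⟩ := hinner (j + 1) h0 hj
    obtain ⟨-, -, -, hp'0, hp'⟩ := eq_of_pathVert_eq_inner (hw'.symm.trans hiv')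
    exact ⟨p', hp'0, hp', hw'⟩

lemma walk_neighbour_eq_pathVert {T : ℕ} {w : ℕ → DVert D n R} {iv : InnerVert D n R}
    (hiv : w 1 = Sum.inr (Sum.inr iv))
    (hadj : ∀ j < T, DEdge (w j) (w (j + 1)) ∨ DEdge (w (j + 1)) (w j))
    (hinner : ∀ j, 0 < j → j < T → ∃ iv, w j = Sum.inr (Sum.inr iv))
    {j k : ℕ} (h0 : 0 < j) (hj : j < T) (hk : k ≤ T) (hjk : k = j + 1 ∨ j = k + 1) :
    ∃ p p', (p' = p + 1 ∨ p = p' + 1) ∧ p ≤ (pathDirs iv.d iv.r).length ∧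
      p' ≤ (pathDirs iv.d iv.r).length ∧
      w j = pathVert iv.d iv.r iv.hr p ∧ w k = pathVert iv.d iv.r iv.hr p' := by
  obtain ⟨p, hp0, hp, hw⟩ := walk_interior_eq_pathVert hiv hadj hinner j h0 hj
  have hjk' : DEdge (w j) (w k) ∨ DEdge (w k) (w j) := by
    rcases hjk with rfl | rfl
    exacts [hadj j hj, (hadj k (by omega)).symm]
  obtain ⟨p', hpp', hw'⟩ := exists_eq_pathVert_of_adj hp0 hp (hw ▸ hjk')
  exact ⟨p, p', hpp', hp.le, by omega, hw, hw'⟩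

lemma exists_pathVert_of_walk {T : ℕ} (hT : 1 < T) (w : ℕ → DVert D n R)
    (hadj : ∀ j < T, DEdge (w j) (w (j + 1)) ∨ DEdge (w (j + 1)) (w j))
    (hinner : ∀ j, 0 < j → j < T → ∃ iv, w j = Sum.inr (Sum.inr iv)) :
    ∃ (e : D) (s : Fin n → D) (hs : s ∈ R) (ψ : ℕ → ℕ),
      (∀ j ≤ T, ψ j ≤ (pathDirs e s).length ∧ w j = pathVert e s hs (ψ j)) ∧
        ∀ j < T, ψ (j + 1) = ψ j + 1 ∨ ψ j = ψ (j + 1) + 1 := by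
  obtain ⟨iv, hiv⟩ := hinner 1 one_pos hT
  have hpos : ∀ j ≤ T, ∃ p, p ≤ (pathDirs iv.d iv.r).length ∧
      w j = pathVert iv.d iv.r iv.hr p := by
    intro j hj
    rcases Nat.eq_zero_or_pos j with rfl | h0
    · obtain ⟨-, p', -, -, hp', -, hw⟩ :=
        walk_neighbour_eq_pathVert hiv hadj hinner one_pos hT hj (Or.inr rfl)
      exact ⟨p', hp', hw⟩
    rcases hj.lt_or_eq with hj | rfl
    · obtain ⟨p, -, hp, hw⟩ := walk_interior_eq_pathVert hiv hadj hinner j h0 hj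
      exact ⟨p, hp.le, hw⟩
    · obtain ⟨-, p', -, -, hp', -, hw⟩ := walk_neighbour_eq_pathVert hiv hadj hinner
        (j := j - 1) (by omega) (by omega) le_rfl (by omega)
      exact ⟨p', hp', hw⟩
  choose! ψ hψ using hpos
  refine ⟨iv.d, iv.r, iv.hr, ψ, hψ, fun j hj => ?_⟩
  have key : ∀ j k, 0 < j → j < T → k ≤ T → (k = j + 1 ∨ j = k + 1) →
      ψ k = ψ j + 1 ∨ ψ j = ψ k + 1 := by
    intro j k h0 hj hk hjk
    obtain ⟨p, p', hpp', hp, hp', hw, hw'⟩ :=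
      walk_neighbour_eq_pathVert hiv hadj hinner h0 hj hk hjk
    have hψj := pathVert_injOn (hψ j hj.le).1 hp ((hψ j hj.le).2.symm.trans hw)
    have hψk := pathVert_injOn (hψ k hk).1 hp' ((hψ k hk).2.symm.trans hw')
    omega
  rcases Nat.eq_zero_or_pos j with rfl | h0
  · have := key 1 0 one_pos hT (by omega) (Or.inr rfl)
    rw [zero_add]
    omega
  · exact key j (j + 1) h0 hj hj (Or.inl rfl)

lemma exists_eq_pathVert [Nonempty D] (hR : R.Nonempty) (v : DVert D n R) :
    ∃ (d : D) (t : Fin n → D) (ht : t ∈ R) (j : ℕ), v = pathVert d t ht j := by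
  rcases v with d | ⟨t, ht⟩ | iv
  · obtain ⟨t, ht⟩ := hR
    exact ⟨d, t, ht, 0, rfl⟩
  · exact ⟨Classical.arbitrary D, t, ht, _, (pathVert_of_length_le le_rfl).symm⟩
  · exact ⟨iv.d, iv.r, iv.hr, iv.j, (pathVert_of_lt iv.hj0 iv.hjlen).symm⟩

/-- The restriction to `D` of a self-map of `𝒟(R)`, with junk value `d` where `d` leaves `D`. -/
def baseMap (h : DVert D n R → DVert D n R) (d : D) : D := (h (Sum.inl d)).elim id fun _ => d

def extend (g : D → D) (hg : IsUnaryPolymorphism R g) : DVert D n R → DVert D n R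
  | Sum.inl d => Sum.inl (g d)
  | Sum.inr (Sum.inl t) => Sum.inr (Sum.inl ⟨fun i => g (t.1 i), hg t.1 t.2⟩)
  | Sum.inr (Sum.inr iv) => pathVert (g iv.d) (fun i => g (iv.r i)) (hg iv.r iv.hr)
      (greedyWalk (pathDirs iv.d iv.r) (pathDirs (g iv.d) fun i => g (iv.r i)) iv.j)

lemma isLevelWalk_greedyWalk_pathDirs (g : D → D) (d : D) (t : Fin n → D) :
    IsLevelWalk (pathDirs d t) (pathDirs (g d) fun i => g (t i))
      (greedyWalk (pathDirs d t) (pathDirs (g d) fun i => g (t i))) := by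
  rw [pathDirs_eq_qDirs, pathDirs_eq_qDirs]
  exact isLevelWalk_greedyWalk (agreeSet_subset_comp g d t)

variable {g : D → D} (hg : IsUnaryPolymorphism R g)

lemma baseMap_extend : baseMap (extend g hg) = g := rfl

lemma extend_pathVert {d : D} {t : Fin n → D} (ht : t ∈ R) {j : ℕ}
    (hj : j ≤ (pathDirs d t).length) :
    extend g hg (pathVert d t ht j) = pathVert (g d) (fun i => g (t i)) (hg t ht)
      (greedyWalk (pathDirs d t) (pathDirs (g d) fun i => g (t i)) j) := by
  rcases pathVert_cases d t ht j with ⟨rfl, h'⟩ | ⟨_, _, h'⟩ | ⟨hlen, h'⟩ <;> rw [h']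
  · rfl
  · rfl
  · have hψ := isLevelWalk_greedyWalk_pathDirs g d t
    obtain rfl : j = (pathDirs d t).length := by omega
    rw [pathDirs_eq_qDirs, pathDirs_eq_qDirs] at hψ ⊢
    rw [hψ.apply_length, ← pathDirs_eq_qDirs, pathVert_of_length_le le_rfl]
    rfl

lemma isDigraphHom_extend : IsDigraphHom DEdge DEdge (extend g hg) := by
  intro a b hab
  have hLv := DEdge.Lv_eq hab
  obtain ⟨d, t, ht, i, hi, hab'⟩ := DEdge.exists_pathVert hab
  have hψ := isLevelWalk_greedyWalk_pathDirs g d t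
  have key : ∀ {k k' : ℕ}, (k = i ∧ k' = i + 1 ∨ k = i + 1 ∧ k' = i) →
      a = pathVert d t ht k → b = pathVert d t ht k' →
      DEdge (extend g hg a) (extend g hg b) := by
    intro k k' hkk' ha hb
    have hk : k ≤ (pathDirs d t).length := by omega
    have hk' : k' ≤ (pathDirs d t).length := by omega
    rw [ha, hb, extend_pathVert hg ht hk, extend_pathVert hg ht hk']
    refine DEdge_pathVert_of_lvl ?_ ?_
    · rcases hkk' with ⟨rfl, rfl⟩ | ⟨rfl, rfl⟩
      exacts [hψ.adj hi, (hψ.adj hi).symm]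
    · rw [hψ.lvl_eq hk, hψ.lvl_eq hk', ← Lv_pathVert d t ht, ← Lv_pathVert d t ht, ← ha,
        ← hb, hLv]
  rcases hab' with ⟨ha, hb⟩ | ⟨ha, hb⟩
  exacts [key (Or.inl ⟨rfl, rfl⟩) ha hb, key (Or.inr ⟨rfl, rfl⟩) ha hb]

end Digraph

end DigraphOfRelation

/-! ### Endomorphisms of `𝒟(R)` -/

namespace IsDigraphHom

open DigraphOfRelation

variable {D : Type} [DecidableEq D] {n : ℕ} {R : Set (Fin n → D)}
  {h : DVert D n R → DVert D n R}

lemma Lv_sub_eq_of_adj (hh : IsDigraphHom DEdge DEdge h) {a b : DVert D n R}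
    (hab : DEdge a b ∨ DEdge b a) : Lv (h b) - Lv b = Lv (h a) - Lv a := by
  rcases hab with hab | hab
  · have := hab.Lv_eq; have := (hh a b hab).Lv_eq; omega
  · have := hab.Lv_eq; have := (hh b a hab).Lv_eq; omega

/-- Along a path `Q` the level shift of `h` is constant, nonnegative at the bottom
and nonpositive at the top, hence zero. -/
lemma Lv_apply_pathVert (hh : IsDigraphHom DEdge DEdge h) (d : D) (t : Fin n → D)
    (ht : t ∈ R) (j : ℕ) : Lv (h (pathVert d t ht j)) = Lv (pathVert d t ht j) := by
  have hshift : ∀ j, Lv (h (pathVert d t ht j)) - Lv (pathVert d t ht j) =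
      Lv (h (Sum.inl d)) := by
    intro j
    induction j with
    | zero => simp [Lv]
    | succ j ih =>
      rcases lt_or_ge j (pathDirs d t).length with hj | hj
      · rw [hh.Lv_sub_eq_of_adj (pathVert_adj hj), ih]
      · rwa [pathVert_of_length_le (by omega), ← pathVert_of_length_le hj]
  have hbot := (Lv_mem_Icc (h (Sum.inl d))).1
  have htop := hshift (pathDirs d t).length
  rw [pathVert_of_length_le le_rfl] at htop
  have := (Lv_mem_Icc (h (Sum.inr (Sum.inl ⟨t, ht⟩)))).2
  have := hshift j
  rw [show Lv (Sum.inr (Sum.inl ⟨t, ht⟩) : DVert D n R) = n + 2 from rfl] at htop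
  omega

lemma Lv_apply [Nonempty D] (hh : IsDigraphHom DEdge DEdge h) (hR : R.Nonempty)
    (v : DVert D n R) : Lv (h v) = Lv v := by
  obtain ⟨d, t, ht, j, rfl⟩ := exists_eq_pathVert hR v
  exact hh.Lv_apply_pathVert d t ht j

lemma exists_isLevelWalk (hh : IsDigraphHom DEdge DEdge h) {d d' : D} {t : Fin n → D}
    {ht : t ∈ R} {t' : {t : Fin n → D // t ∈ R}} (hd : h (Sum.inl d) = Sum.inl d')
    (htop : h (Sum.inr (Sum.inl ⟨t, ht⟩)) = Sum.inr (Sum.inl t')) :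
    ∃ ψ, IsLevelWalk (pathDirs d t) (pathDirs d' t'.1) ψ ∧
      ∀ j ≤ (pathDirs d t).length, h (pathVert d t ht j) = pathVert d' t'.1 t'.2 (ψ j) := by
  have hinner : ∀ j, 0 < j → j < (pathDirs d t).length →
      ∃ iv, h (pathVert d t ht j) = Sum.inr (Sum.inr iv) := by
    intro j h0 hj
    rw [pathDirs_eq_qDirs] at hj
    have := lvl_qDirs_mem_Icc h0 hj
    rw [← pathDirs_eq_qDirs, ← Lv_pathVert d t ht, ← hh.Lv_apply_pathVert] at this
    exact exists_eq_inner_of_Lv this.1 this.2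
  obtain ⟨e, s, hs, ψ, hψ, hψadj⟩ := exists_pathVert_of_walk
    (lt_of_lt_of_le one_lt_two (two_le_length_pathDirs d t)) (fun j => h (pathVert d t ht j))
    (fun j hj => pathVert_adj hj |>.imp (hh _ _) (hh _ _)) hinner
  obtain ⟨hψ0, rfl⟩ := eq_of_pathVert_eq_inl ((hψ 0 (Nat.zero_le _)).2.symm.trans hd)
  obtain ⟨-, hs'⟩ := eq_of_pathVert_eq_top ((hψ _ le_rfl).2.symm.trans
    ((congrArg h (pathVert_of_length_le le_rfl)).trans htop))
  obtain ⟨t', ht'⟩ := t'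
  obtain rfl : t' = s := hs'
  refine ⟨ψ, ⟨hψ0, fun j hj => ⟨hψadj j hj, ?_⟩⟩, fun j hj => (hψ j hj).2⟩
  rw [← Lv_pathVert _ _ hs, ← (hψ (j + 1) hj).2, hh.Lv_apply_pathVert, Lv_pathVert]

lemma apply_inl [Nonempty D] (hh : IsDigraphHom DEdge DEdge h) (hR : R.Nonempty) (d : D) :
    h (Sum.inl d) = Sum.inl (baseMap h d) := by
  obtain ⟨e, he⟩ := exists_eq_inl_of_Lv_eq_zero ((hh.Lv_apply hR (Sum.inl d)).trans rfl)
  rw [baseMap, he]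
  rfl

lemma exists_apply_top [Nonempty D] (hh : IsDigraphHom DEdge DEdge h) (hR : R.Nonempty)
    (t : {t : Fin n → D // t ∈ R}) : ∃ t', h (Sum.inr (Sum.inl t)) = Sum.inr (Sum.inl t') :=
  exists_eq_top_of_Lv_eq ((hh.Lv_apply hR (Sum.inr (Sum.inl t))).trans rfl)

/-- The path from `t i` to `t` has a single edge as its `i`-th block, which must go to a single
edge of the image path. -/
lemma val_eq_of_apply_top [Nonempty D] (hh : IsDigraphHom DEdge DEdge h) (hR : R.Nonempty)
    {t t' : {t : Fin n → D // t ∈ R}} (ht' : h (Sum.inr (Sum.inl t)) = Sum.inr (Sum.inl t')) :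
    t'.1 = fun i => baseMap h (t.1 i) := by
  funext i
  obtain ⟨ψ, hψ, -⟩ := hh.exists_isLevelWalk (hh.apply_inl hR (t.1 i)) ht'
  rw [pathDirs_eq_qDirs, pathDirs_eq_qDirs] at hψ
  exact (coe_mem_agreeSet.mp (hψ.subset i i.2 (coe_mem_agreeSet.mpr rfl))).symm

lemma isUnaryPolymorphism_baseMap [Nonempty D] (hh : IsDigraphHom DEdge DEdge h)
    (hR : R.Nonempty) : IsUnaryPolymorphism R (baseMap h) := by
  intro t ht
  obtain ⟨t', ht'⟩ := hh.exists_apply_top hR ⟨t, ht⟩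
  rw [← hh.val_eq_of_apply_top hR ht']
  exact t'.2

lemma apply_top [Nonempty D] (hh : IsDigraphHom DEdge DEdge h) (hR : R.Nonempty)
    (t : {t : Fin n → D // t ∈ R}) :
    h (Sum.inr (Sum.inl t)) =
      Sum.inr (Sum.inl ⟨fun i => baseMap h (t.1 i),
        hh.isUnaryPolymorphism_baseMap hR t.1 t.2⟩) := by
  obtain ⟨t', ht'⟩ := hh.exists_apply_top hR t
  rw [ht']
  congr 2
  exact Subtype.ext (hh.val_eq_of_apply_top hR ht')

lemma eq_of_baseMap_eq [Nonempty D] {h' : DVert D n R → DVert D n R}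
    (hh : IsDigraphHom DEdge DEdge h) (hh' : IsDigraphHom DEdge DEdge h') (hR : R.Nonempty)
    (hb : baseMap h = baseMap h') : h = h' := by
  funext v
  rcases v with d | t | iv
  · rw [hh.apply_inl hR, hh'.apply_inl hR, hb]
  · rw [hh.apply_top hR, hh'.apply_top hR]
    congr 2
    exact Subtype.ext (funext fun i => congrFun hb (t.1 i))
  · rw [← pathVert_of_lt iv.hj0 iv.hjlen]
    obtain ⟨ψ, hψ, hψh⟩ := hh.exists_isLevelWalk (hh.apply_inl hR _) (hh.apply_top hR _)
    obtain ⟨ψ', hψ', hψh'⟩ :=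
      hh'.exists_isLevelWalk (hh'.apply_inl hR _) (hh'.apply_top hR _)
    simp only [← hb] at hψ' hψh'
    rw [hψh _ iv.hjlen.le, hψh' _ iv.hjlen.le]
    rw [pathDirs_eq_qDirs, pathDirs_eq_qDirs] at hψ hψ'
    rw [hψ.eqOn hψ' _ (by rw [← pathDirs_eq_qDirs]; exact iv.hjlen.le)]

end IsDigraphHom

theorem endo_unaryPoly_correspondence_general {D : Type} [DecidableEq D] {n : ℕ}
    (hn : 1 ≤ n) (R : Set (Fin n → D)) (hR : R.Nonempty) :
    (∀ h : DVert D n R → DVert D n R, IsDigraphHom DEdge DEdge h →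
      (∀ d : D, ∃ d' : D, h (Sum.inl d) = Sum.inl d') ∧
      (∀ t : {t : Fin n → D // t ∈ R}, ∃ t' : {t : Fin n → D // t ∈ R},
        h (Sum.inr (Sum.inl t)) = Sum.inr (Sum.inl t'))) ∧
    ∃ res : {h : DVert D n R → DVert D n R // IsDigraphHom DEdge DEdge h} →
        {g : D → D // IsUnaryPolymorphism R g},
      Function.Bijective res ∧
      (∀ (h : {h : DVert D n R → DVert D n R // IsDigraphHom DEdge DEdge h}) (d : D),
        h.1 (Sum.inl d) = Sum.inl ((res h).1 d)) ∧
      (∀ (h : {h : DVert D n R → DVert D n R // IsDigraphHom DEdge DEdge h})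
          (t : {t : Fin n → D // t ∈ R}),
        h.1 (Sum.inr (Sum.inl t)) =
          Sum.inr (Sum.inl ⟨fun s => (res h).1 (t.1 s), (res h).2 t.1 t.2⟩)) := by
  have : Nonempty D := ⟨hR.some ⟨0, hn⟩⟩
  refine ⟨fun h hh => ⟨fun d => ⟨_, hh.apply_inl hR d⟩, hh.exists_apply_top hR⟩,
    fun h => ⟨DigraphOfRelation.baseMap h.1, h.2.isUnaryPolymorphism_baseMap hR⟩,
    ⟨fun h₁ h₂ h => ?_, fun g => ?_⟩, fun h => h.2.apply_inl hR, fun h => h.2.apply_top hR⟩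
  · exact Subtype.ext (h₁.2.eq_of_baseMap_eq h₂.2 hR (congrArg Subtype.val h))
  · exact ⟨⟨DigraphOfRelation.extend g.1 g.2, DigraphOfRelation.isDigraphHom_extend g.2⟩,
      Subtype.ext (DigraphOfRelation.baseMap_extend g.2)⟩

/-- every endomorphism of `𝒟(R)` maps `D` into `D` and `R` into `R`, its
restriction to `D` is a unary polymorphism of `R`, the restriction map is a bijection
between endomorphisms of `𝒟(R)` and unary polymorphisms of `R`, and an endomorphism
acts on `R` componentwise via its restriction to `D`. -/
theorem endo_unaryPoly_correspondence {D : Type} [Fintype D] [DecidableEq D] {n : ℕ}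
    (hn : 1 ≤ n) (R : Set (Fin n → D)) (hR : R.Nonempty) :
    (∀ h : DVert D n R → DVert D n R, IsDigraphHom DEdge DEdge h →
      (∀ d : D, ∃ d' : D, h (Sum.inl d) = Sum.inl d') ∧
      (∀ t : {t : Fin n → D // t ∈ R}, ∃ t' : {t : Fin n → D // t ∈ R},
        h (Sum.inr (Sum.inl t)) = Sum.inr (Sum.inl t'))) ∧
    ∃ res : {h : DVert D n R → DVert D n R // IsDigraphHom DEdge DEdge h} →
        {g : D → D // IsUnaryPolymorphism R g},
      Function.Bijective res ∧
      (∀ (h : {h : DVert D n R → DVert D n R // IsDigraphHom DEdge DEdge h}) (d : D),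
        h.1 (Sum.inl d) = Sum.inl ((res h).1 d)) ∧
      (∀ (h : {h : DVert D n R → DVert D n R // IsDigraphHom DEdge DEdge h})
          (t : {t : Fin n → D // t ∈ R}),
        h.1 (Sum.inr (Sum.inl t)) =
          Sum.inr (Sum.inl ⟨fun s => (res h).1 (t.1 s), (res h).2 t.1 t.2⟩)) :=
  endo_unaryPoly_correspondence_general hn R hR
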